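/- arXiv:1702.03780 — 9 statements merged into one kernel-verified Lean document; each statement's English description precedes it below -/
import Mathlib

section
/- Let τ > 0, N ∈ ℕ, and let H : ℝ^N → [0,∞) and F : ℝ^N → [0,∞) be functions. Let (v^k)_{k≥0} be a sequence in ℝ^N and define the entropy production P(v^k) := −(H(v^k) − H(v^{k−1}))/τ for k ≥ 1. Assume: (A1) there exist constants C_m, C_M > 0 such that C_m·F(v^k) ≤ P(v^k) ≤ C_M·F(v^k) for all k ≥ 1; (A2) there exists κ > 0 such that F(v^k) − F(v^{k−1}) ≤ −τκ·F(v^k) for all k ≥ 1; (A3) H(v^k) → 0 as k → ∞. Then, with λ := (C_m/C_M)·κ, it holds that H(v^k) ≤ (1 + λτ)^{−k}·H(v^0) for all k ∈ ℕ; equivalently, H(v^k) ≤ e^{−ηλkτ}·H(v^0) with η := log(1 + τλ)/(τλ) ∈ (0,1). -/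
open Filter

/-!
Summing the one-step bounds `τ P(v^k) ≤ τ C_M F(v^k) ≤ (C_M/κ) (F(v^{k-1}) - F(v^k))` telescopes, and
since `H(v^k) → 0` and `F ≥ 0` this yields the convex Sobolev inequality `H ≤ (C_M/κ) F` along the
sequence. Feeding it into the lower bound `P ≥ C_m F` gives `H(v^{k-1}) - H(v^k) ≥ λτ H(v^k)`, i.e.
one step contracts the entropy by the factor `(1 + λτ)⁻¹`.
-/

section DiscreteEntropy

variable {h f : ℕ → ℝ} {τ κ Cm CM : ℝ}

theorem entropy_drop_le_fisher_drop (hτ : 0 < τ) (hκ : 0 < κ) (hCM : 0 ≤ CM) {k : ℕ}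
    (hP : -(h (k + 1) - h k) / τ ≤ CM * f (k + 1))
    (hf : f (k + 1) - f k ≤ -(τ * κ) * f (k + 1)) :
    h k - h (k + 1) ≤ CM / κ * (f k - f (k + 1)) := by
  rw [div_le_iff₀ hτ] at hP
  calc h k - h (k + 1) ≤ CM / κ * (τ * κ * f (k + 1)) := by
        rw [div_mul_eq_mul_div, le_div_iff₀ hκ]; nlinarith
    _ ≤ CM / κ * (f k - f (k + 1)) := by gcongr; linarith

theorem entropy_le_mul_fisher_of_tendsto {c : ℝ} (hc : 0 ≤ c) (hf : ∀ k, 0 ≤ f k)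
    (hh : Tendsto h atTop (nhds 0)) (hdrop : ∀ k, h k - h (k + 1) ≤ c * (f k - f (k + 1)))
    (k : ℕ) : h k ≤ c * f k := by
  have hmono : Monotone fun n => h n - c * f n :=
    monotone_nat_of_le_succ fun n => by linarith [hdrop n]
  have hle : ∀ n ≥ k, h k - c * f k ≤ h n := fun n hn =>
    (hmono hn).trans (by linarith [mul_nonneg hc (hf n)])
  linarith [ge_of_tendsto hh (eventually_atTop.2 ⟨k, hle⟩)]

theorem entropy_succ_le_inv_mul (hτ : 0 < τ) (hκ : 0 < κ) (hCm : 0 ≤ Cm) (hCM : 0 < CM)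
    {k : ℕ} (hP : Cm * f (k + 1) ≤ -(h (k + 1) - h k) / τ)
    (hsobolev : h (k + 1) ≤ CM / κ * f (k + 1)) :
    h (k + 1) ≤ (1 + Cm / CM * κ * τ)⁻¹ * h k := by
  have hlower : Cm / CM * κ * h (k + 1) ≤ Cm * f (k + 1) := by
    calc Cm / CM * κ * h (k + 1) ≤ Cm / CM * κ * (CM / κ * f (k + 1)) := by gcongr
      _ = Cm * f (k + 1) := by field_simp
  rw [le_div_iff₀ hτ] at hP
  rw [le_inv_mul_iff₀ (by positivity)]
  nlinarith

end DiscreteEntropy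

theorem Real.exp_neg_log_one_add_div_mul_mul_natCast {x : ℝ} (hx : 0 < 1 + x) (n : ℕ) :
    Real.exp (-(Real.log (1 + x) / x) * x * n) = (1 + x)⁻¹ ^ n := by
  have hcancel : -(Real.log (1 + x) / x) * x = -Real.log (1 + x) := by
    rcases eq_or_ne x 0 with rfl | hx0
    · simp
    · field_simp
  rw [hcancel, mul_comm, Real.exp_nat_mul, Real.exp_neg, Real.exp_log hx]

theorem discrete_bakry_emery_general
    (τ : ℝ) (hτ : 0 < τ) (N : ℕ)
    (H F : (Fin N → ℝ) → ℝ)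
    (hF : ∀ w, 0 ≤ F w)
    (v : ℕ → Fin N → ℝ)
    (Cm CM : ℝ) (hCm : 0 < Cm) (hCM : 0 < CM)
    (hA1 : ∀ k : ℕ, 1 ≤ k →
      Cm * F (v k) ≤ -(H (v k) - H (v (k - 1))) / τ ∧
      -(H (v k) - H (v (k - 1))) / τ ≤ CM * F (v k))
    (κ : ℝ) (hκ : 0 < κ)
    (hA2 : ∀ k : ℕ, 1 ≤ k → F (v k) - F (v (k - 1)) ≤ -(τ * κ) * F (v k))
    (hA3 : Tendsto (fun k => H (v k)) atTop (nhds 0)) :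
    ∀ k : ℕ, H (v k) ≤ (1 + (Cm / CM) * κ * τ)⁻¹ ^ k * H (v 0) ∧
      H (v k) ≤ Real.exp (-(Real.log (1 + τ * ((Cm / CM) * κ)) / (τ * ((Cm / CM) * κ)))
        * ((Cm / CM) * κ) * k * τ) * H (v 0) := by
  have hdrop (k : ℕ) : H (v k) - H (v (k + 1)) ≤ CM / κ * (F (v k) - F (v (k + 1))) :=
    entropy_drop_le_fisher_drop (h := fun n => H (v n)) (f := fun n => F (v n))
      hτ hκ hCM.le (hA1 (k + 1) k.succ_pos).2 (hA2 (k + 1) k.succ_pos)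
  have hsobolev := entropy_le_mul_fisher_of_tendsto (by positivity) (fun k => hF (v k)) hA3 hdrop
  have hgeom (k : ℕ) : H (v k) ≤ (1 + Cm / CM * κ * τ)⁻¹ ^ k * H (v 0) :=
    le_geom (u := fun n => H (v n)) (by positivity) k fun j _ =>
      entropy_succ_le_inv_mul (h := fun n => H (v n)) (f := fun n => F (v n))
        hτ hκ hCm.le hCM (hA1 (j + 1) j.succ_pos).1 (hsobolev (j + 1))
  intro k
  refine ⟨hgeom k, ?_⟩
  have hpos : 0 < 1 + τ * (Cm / CM * κ) := by positivity
  convert hgeom k using 2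
  rw [mul_comm (Cm / CM * κ) τ, ← Real.exp_neg_log_one_add_div_mul_mul_natCast hpos]
  congr 1
  ring

/-- Abstract discrete Bakry–Emery method. -/
theorem discrete_bakry_emery
    (τ : ℝ) (hτ : 0 < τ) (N : ℕ)
    (H F : (Fin N → ℝ) → ℝ)
    (hH : ∀ w, 0 ≤ H w) (hF : ∀ w, 0 ≤ F w)
    (v : ℕ → Fin N → ℝ)
    (Cm CM : ℝ) (hCm : 0 < Cm) (hCM : 0 < CM)
    (hA1 : ∀ k : ℕ, 1 ≤ k →
      Cm * F (v k) ≤ -(H (v k) - H (v (k - 1))) / τ ∧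
      -(H (v k) - H (v (k - 1))) / τ ≤ CM * F (v k))
    (κ : ℝ) (hκ : 0 < κ)
    (hA2 : ∀ k : ℕ, 1 ≤ k → F (v k) - F (v (k - 1)) ≤ -(τ * κ) * F (v k))
    (hA3 : Tendsto (fun k => H (v k)) atTop (nhds 0)) :
    ∀ k : ℕ, H (v k) ≤ (1 + (Cm / CM) * κ * τ)⁻¹ ^ k * H (v 0) ∧
      H (v k) ≤ Real.exp (-(Real.log (1 + τ * ((Cm / CM) * κ)) / (τ * ((Cm / CM) * κ)))
        * ((Cm / CM) * κ) * k * τ) * H (v 0) :=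
  discrete_bakry_emery_general τ hτ N H F hF v Cm CM hCm hCM hA1 κ hκ hA2 hA3
end

section
/- Let α, β > 0 with α + β ≠ 1, and let u : ℝ → ℝ be a smooth positive 1-periodic function. Then ∫_0^1 u(x)^{α−1}·(u^β)''(x) dx = −(4(α−1)β/(α+β−1)²) ∫_0^1 ((u^{(α+β−1)/2})'(x))² dx. -/
/-- Integration-by-parts identity expressing the entropy production as a
negative multiple of the Fisher information. -/
theorem entropy_production_identity
    (α β : ℝ) (hα : 0 < α) (hβ : 0 < β) (hab : α + β ≠ 1)
    (u : ℝ → ℝ) (hsmooth : ContDiff ℝ (⊤ : ℕ∞) u)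
    (hpos : ∀ x, 0 < u x) (hper : ∀ x, u (x + 1) = u x) :
    ∫ x in (0:ℝ)..1, u x ^ (α - 1) * deriv (deriv (fun y => u y ^ β)) x
      = -(4 * (α - 1) * β / (α + β - 1) ^ 2) *
        ∫ x in (0:ℝ)..1, (deriv (fun y => u y ^ ((α + β - 1) / 2)) x) ^ 2 := by
  set c : ℝ := α + β - 1 with hc
  have hcne : c ≠ 0 := sub_ne_zero.2 hab
  have hune : ∀ x, u x ≠ 0 := fun x => (hpos x).ne'
  have hud : Differentiable ℝ u := hsmooth.differentiable (by simp)
  have hu : ∀ x, HasDerivAt u (deriv u x) x := fun x => (hud x).hasDerivAt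
  have hrpow : ∀ r : ℝ, ContDiff ℝ (⊤ : ℕ∞) (fun y => u y ^ r) := by
    intro r
    rw [contDiff_iff_contDiffAt]
    intro x
    exact (Real.contDiffAt_rpow_const_of_ne (hune x)).comp x hsmooth.contDiffAt
  have hd1 : ∀ (r : ℝ) (x : ℝ),
      HasDerivAt (fun y => u y ^ r) (r * u x ^ (r - 1) * deriv u x) x := by
    intro r x
    have h := (hu x).rpow_const (p := r) (Or.inl (hune x))
    convert h using 1
    ring
  have hder : ∀ (r : ℝ), deriv (fun y => u y ^ r)
      = fun x => r * u x ^ (r - 1) * deriv u x := by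
    intro r; funext x; exact (hd1 r x).deriv
  have hdu : ContDiff ℝ (↑(⊤:ℕ∞)) (deriv u) :=
    (contDiff_infty_iff_deriv.1 (hsmooth.of_le (by simp))).2
  have hdud : Differentiable ℝ (deriv u) :=
    hdu.differentiable (by simp)
  have hddu : Continuous (deriv (deriv u)) :=
    (contDiff_infty_iff_deriv.1 hdu).2.continuous
  -- second derivative of u^β
  have hvd : ∀ x : ℝ, HasDerivAt (deriv (fun y => u y ^ β))
      (β * ((β - 1) * u x ^ (β - 1 - 1) * deriv u x * deriv u x
        + u x ^ (β - 1) * deriv (deriv u) x)) x := by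
    intro x
    rw [hder β]
    have h1 : HasDerivAt (fun y => u y ^ (β - 1) * deriv u y)
        ((β - 1) * u x ^ (β - 1 - 1) * deriv u x * deriv u x
          + u x ^ (β - 1) * deriv (deriv u) x) x :=
      (hd1 (β - 1) x).mul ((hdud x).hasDerivAt)
    have h2 := h1.const_mul β
    have h3 : (fun y => β * (u y ^ (β - 1) * deriv u y))
        = fun y => β * u y ^ (β - 1) * deriv u y := by
      funext y; ring
    rw [h3] at h2
    exact h2
  have hvdd : deriv (deriv (fun y => u y ^ β))
      = fun x => β * ((β - 1) * u x ^ (β - 1 - 1) * deriv u x * deriv u x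
        + u x ^ (β - 1) * deriv (deriv u) x) := by
    funext x; exact (hvd x).deriv
  -- G := u^(α-1) * deriv (u^β)
  set G : ℝ → ℝ := fun x => u x ^ (α - 1) * deriv (fun y => u y ^ β) x with hG
  have hGd : ∀ x : ℝ, HasDerivAt G
      ((α - 1) * u x ^ (α - 1 - 1) * deriv u x * deriv (fun y => u y ^ β) x
        + u x ^ (α - 1) * deriv (deriv (fun y => u y ^ β)) x) x := by
    intro x
    have h1 : HasDerivAt (fun y => deriv (fun z => u z ^ β) y)
        (deriv (deriv (fun y => u y ^ β)) x) x := by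
      rw [(hvd x).deriv]; exact hvd x
    exact (hd1 (α - 1) x).mul h1
  have hGderiv : deriv G = fun x =>
      (α - 1) * u x ^ (α - 1 - 1) * deriv u x * deriv (fun y => u y ^ β) x
        + u x ^ (α - 1) * deriv (deriv (fun y => u y ^ β)) x := by
    funext x; exact (hGd x).deriv
  have hGcont : Continuous (deriv G) := by
    rw [hGderiv, hvdd, hder β]
    have hc1 := (hrpow (α - 1 - 1)).continuous
    have hc2 := (hrpow (β - 1)).continuous
    have hc3 := (hrpow (α - 1)).continuous
    have hc4 := (hrpow (β - 1 - 1)).continuous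
    have hc5 := hdu.continuous
    fun_prop
  -- periodicity of derivatives
  have hperd : ∀ (f : ℝ → ℝ), Function.Periodic f 1 →
      Function.Periodic (deriv f) 1 := by
    intro f hf x
    have h : (fun y => f (y + 1)) = f := funext hf
    rw [← deriv_comp_add_const, h]
  set I : ℝ := ∫ x in (0:ℝ)..1, u x ^ (α + β - 3) * (deriv u x) ^ 2 with hI
  have hcont : ∀ r : ℝ, Continuous (fun x => u x ^ r * (deriv u x) ^ 2) :=
    fun r => ((hrpow r).continuous).mul ((hdu.continuous).pow 2)
  -- LHS
  have hLHS : (∫ x in (0:ℝ)..1, u x ^ (α - 1)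
      * deriv (deriv (fun y => u y ^ β)) x) = -((α - 1) * β) * I := by
    have key : ∀ x : ℝ, u x ^ (α - 1) * deriv (deriv (fun y => u y ^ β)) x
        = deriv G x - (α - 1) * β * (u x ^ (α + β - 3) * (deriv u x) ^ 2) := by
      intro x
      rw [hGderiv, hvdd, hder β]
      have e1 : u x ^ (α - 1 - 1) * u x ^ (β - 1) = u x ^ (α + β - 3) := by
        rw [← Real.rpow_add (hpos x)]; congr 1; ring
      simp only []
      linear_combination (-(α - 1) * β * (deriv u x) ^ 2) * e1
    have hsplit : (∫ x in (0:ℝ)..1, u x ^ (α - 1)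
        * deriv (deriv (fun y => u y ^ β)) x)
        = (∫ x in (0:ℝ)..1, deriv G x) - (α - 1) * β * I := by
      rw [hI, ← intervalIntegral.integral_const_mul,
        ← intervalIntegral.integral_sub]
      · exact intervalIntegral.integral_congr (fun x _ => key x)
      · exact hGcont.intervalIntegrable 0 1
      · exact (continuous_const.mul (hcont (α + β - 3))).intervalIntegrable 0 1
    have hFTC : (∫ x in (0:ℝ)..1, deriv G x) = G 1 - G 0 :=
      intervalIntegral.integral_deriv_eq_sub
        (fun x _ => (hGd x).differentiableAt)
        (hGcont.intervalIntegrable 0 1)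
    have hG10 : G 1 = G 0 := by
      have hpv : Function.Periodic (fun y => u y ^ β) 1 := fun x => by
        simp [hper x]
      have h1 : u 1 = u 0 := by simpa using hper 0
      have h2 : deriv (fun y => u y ^ β) 1 = deriv (fun y => u y ^ β) 0 := by
        simpa using hperd _ hpv 0
      simp only [hG, h1, h2]
    rw [hsplit, hFTC, hG10]
    ring
  -- RHS
  have hRHS : (∫ x in (0:ℝ)..1, (deriv (fun y => u y ^ (c / 2)) x) ^ 2)
      = c ^ 2 / 4 * I := by
    have key : ∀ x : ℝ, (deriv (fun y => u y ^ (c / 2)) x) ^ 2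
        = c ^ 2 / 4 * (u x ^ (α + β - 3) * (deriv u x) ^ 2) := by
      intro x
      rw [hder (c / 2)]
      have e1 : u x ^ (c / 2 - 1) * u x ^ (c / 2 - 1) = u x ^ (α + β - 3) := by
        rw [← Real.rpow_add (hpos x)]; congr 1; rw [hc]; ring
      simp only []
      linear_combination (c ^ 2 / 4 * (deriv u x) ^ 2) * e1
    rw [hI, ← intervalIntegral.integral_const_mul]
    exact intervalIntegral.integral_congr (fun x _ => key x)
  rw [hLHS]
  show _ = -(4 * (α - 1) * β / c ^ 2) * ∫ x in (0:ℝ)..1,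
    (deriv (fun y => u y ^ (c / 2)) x) ^ 2
  rw [hRHS]
  field_simp
end

section
/- Let α > 1, β > 0, τ > 0, N ∈ ℕ with N ≥ 1, h = 1/N, and let v̄ = (v̄_1, …, v̄_N) ∈ ℝ^N with v̄_i ≥ 0 for all i. Then there exists v = (v_1, …, v_N) ∈ ℝ^N with v_i ≥ 0 for all i such that, with cyclic indices (v_0 := v_N, v_{N+1} := v_1), v_i − v̄_i = (ατ/h²)·v_i^{(α−1)/α}·(v_{i+1}^{β/α} − 2v_i^{β/α} + v_{i−1}^{β/α}) for all i = 1, …, N. -/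
/-!
The scheme is variational. With `C = ατ/h²`, `γ = β/α`, `θ = (α-1)/α`, `q = γ - θ` and
`Q' t = t ^ (q-1)`, the partial derivative in `vᵢ > 0` of
`E v = ∑ᵢ (vᵢ ^ (q+1) / (q+1) - v̄ᵢ Q vᵢ) + C/(2γ) ∑ᵢ (vᵢ₊₁ ^ γ - vᵢ ^ γ)²`
is `vᵢ ^ (q-1)` times the defect of the `i`-th equation. Minimise `E` over a box `∏ᵢ [δᵢ, M]`
with `M > max v̄`: on a face `vᵢ = M` the derivative is positive, and on a face `vᵢ = δᵢ > 0` it is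
negative once `δᵢ + 2C δᵢ ^ (θ+γ) < v̄ᵢ`. So the minimiser solves the `i`-th equation wherever
`vᵢ > 0`; and `vᵢ = 0` forces `δᵢ = 0`, which is chosen only when `v̄ᵢ = 0`, so both sides vanish.
-/

open Set Filter Function Topology

section MinOnIcc

variable {f : ℝ → ℝ} {a b x c : ℝ}

theorem IsMinOn.nonneg_of_hasDerivAt_of_lt (hmin : IsMinOn f (Icc a b) x) (hax : a ≤ x)
    (hxb : x < b) (hf : HasDerivAt f c x) : 0 ≤ c := by
  have h := hmin.localize.hasFDerivWithinAt_nonneg hf.hasFDerivAt.hasFDerivWithinAt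
    (sub_mem_posTangentConeAt_of_segment_subset
      ((segment_eq_Icc hxb.le).trans_subset (Icc_subset_Icc_left hax)))
  exact nonneg_of_mul_nonneg_right (by simpa using h) (sub_pos.2 hxb)

theorem IsMinOn.nonpos_of_hasDerivAt_of_lt (hmin : IsMinOn f (Icc a b) x) (hax : a < x)
    (hxb : x ≤ b) (hf : HasDerivAt f c x) : c ≤ 0 := by
  have h := hmin.localize.hasFDerivWithinAt_nonneg hf.hasFDerivAt.hasFDerivWithinAt
    (sub_mem_posTangentConeAt_of_segment_subset ((segment_symm ℝ x a).trans_subset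
      ((segment_eq_Icc hax.le).trans_subset (Icc_subset_Icc_right hxb))))
  exact nonpos_of_mul_nonneg_right (by simpa using h) (sub_neg.2 hax)

theorem IsMinOn.hasDerivAt_eq_zero_of_mem_Icc (hmin : IsMinOn f (Icc a b) x)
    (hx : x ∈ Icc a b) (hf : HasDerivAt f c x) (ha : x = a → c < 0) (hb : x = b → 0 < c) :
    c = 0 := by
  have hright : x < b → 0 ≤ c := fun hxb => hmin.nonneg_of_hasDerivAt_of_lt hx.1 hxb hf
  have hleft : a < x → c ≤ 0 := fun hax => hmin.nonpos_of_hasDerivAt_of_lt hax hx.2 hf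
  rcases hx.1.eq_or_lt with hax | hax <;> rcases hx.2.eq_or_lt with hxb | hxb
  · linarith [ha hax.symm, hb hxb]
  · linarith [ha hax.symm, hright hxb]
  · linarith [hb hxb, hleft hax]
  · linarith [hright hxb, hleft hax]

end MinOnIcc

theorem IsMinOn.comp_update {ι α β : Type*} [DecidableEq ι] [Preorder β] {f : (ι → α) → β}
    {t : ι → Set α} {x : ι → α} (hmin : IsMinOn f (univ.pi t) x) (hx : x ∈ univ.pi t) (i : ι) :
    IsMinOn (fun y => f (update x i y)) (t i) (x i) :=
  isMinOn_iff.2 fun y hy => by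
    simpa using isMinOn_iff.1 hmin _ ((update_mem_pi_iff_of_mem hx).2 fun _ => hy)

theorem exists_pos_add_mul_rpow_lt {K r v : ℝ} (hr : 0 < r) (hv : 0 < v) :
    ∃ d, 0 < d ∧ d + K * d ^ r < v := by
  have hcont : ContinuousAt (fun d : ℝ => d + K * d ^ r) 0 :=
    continuousAt_id.add (continuousAt_const.mul (Real.continuousAt_rpow_const 0 r (.inr hr.le)))
  have hlim : Tendsto (fun d : ℝ => d + K * d ^ r) (𝓝[>] 0) (𝓝 0) := by
    simpa [Real.zero_rpow hr.ne'] using hcont.tendsto.mono_left nhdsWithin_le_nhds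
  obtain ⟨d, hlt, hd⟩ := ((hlim.eventually (eventually_lt_nhds hv)).and
    eventually_mem_nhdsWithin).exists
  exact ⟨d, hd, hlt⟩

theorem exists_lower_barrier {K r v : ℝ} (hK : 0 ≤ K) (hr : 0 < r) (hv : 0 ≤ v) :
    ∃ δ, 0 ≤ δ ∧ δ ≤ v ∧ (0 < v → 0 < δ) ∧ (0 < δ → δ + K * δ ^ r < v) := by
  rcases hv.eq_or_lt with rfl | hv
  · exact ⟨0, le_rfl, le_rfl, fun h => h.false.elim, fun h => h.false.elim⟩
  obtain ⟨δ, hδ, hlt⟩ := exists_pos_add_mul_rpow_lt (K := K) hr hv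
  have : 0 ≤ K * δ ^ r := by positivity
  exact ⟨δ, hδ.le, by linarith, fun _ => hδ, fun _ => hlt⟩

noncomputable def rpowAntideriv (q : ℝ) : ℝ → ℝ :=
  if q = 0 then Real.log else fun t => t ^ q / q

theorem hasDerivAt_rpowAntideriv (q : ℝ) {t : ℝ} (ht : 0 < t) :
    HasDerivAt (rpowAntideriv q) (t ^ (q - 1)) t := by
  unfold rpowAntideriv
  split_ifs with hq
  · simpa [hq, Real.rpow_neg_one] using Real.hasDerivAt_log ht.ne'
  · refine ((Real.hasDerivAt_rpow_const (.inl ht.ne')).div_const q).congr_deriv ?_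
    field_simp

noncomputable def sitePotential (q vb t : ℝ) : ℝ :=
  t ^ (q + 1) / (q + 1) - vb * rpowAntideriv q t

theorem hasDerivAt_sitePotential {q : ℝ} (vb : ℝ) (hq : q + 1 ≠ 0) {t : ℝ} (ht : 0 < t) :
    HasDerivAt (sitePotential q vb) (t ^ (q - 1) * (t - vb)) t := by
  have hpow := (Real.hasDerivAt_rpow_const (p := q + 1) (.inl ht.ne')).div_const (q + 1)
  refine (hpow.sub ((hasDerivAt_rpowAntideriv q ht).const_mul vb)).congr_deriv ?_
  rw [add_sub_cancel_right, mul_sub, ← Real.rpow_add_one ht.ne', sub_add_cancel]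
  field_simp

theorem continuousAt_sitePotential {q vb t : ℝ} (hq : 0 < q + 1) (ht : vb = 0 ∨ 0 < t) :
    ContinuousAt (sitePotential q vb) t := by
  have hpow : ContinuousAt (fun t : ℝ => t ^ (q + 1) / (q + 1)) t :=
    ((Real.continuous_rpow_const hq.le).div_const _).continuousAt
  rcases ht with rfl | ht
  · have hzero : sitePotential q 0 = fun t => t ^ (q + 1) / (q + 1) := by
      funext t; simp [sitePotential]
    rwa [hzero]
  · exact hpow.sub (continuousAt_const.mul (hasDerivAt_rpowAntideriv q ht).continuousAt)

theorem hasDerivAt_sum_apply_update {ι : Type*} [Fintype ι] [DecidableEq ι]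
    {f : ι → ℝ → ℝ} {x : ι → ℝ} {i : ι} {f' : ℝ} (hf : HasDerivAt (f i) f' (x i)) :
    HasDerivAt (fun t => ∑ j, f j (update x i t j)) f' (x i) := by
  simp_rw [apply_update f x i, Finset.sum_update_of_mem (Finset.mem_univ i)]
  exact hf.add_const _

section CyclicEnergy

variable {ι : Type*} [Fintype ι] [AddGroup ι]

theorem hasDerivAt_sum_sq_sub_shift_update [DecidableEq ι] (s : ι) {g : ℝ → ℝ} {x : ι → ℝ}
    {i : ι} {g' : ℝ} (hg : HasDerivAt g g' (x i)) :
    HasDerivAt (fun t => ∑ j, (g (update x i t (j + s)) - g (update x i t j)) ^ 2)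
      (2 * g' * (2 * g (x i) - g (x (i + s)) - g (x (i - s)))) (x i) := by
  set P : ι → ℝ := Pi.single i g'
  have hcoord : ∀ k, HasDerivAt (fun t => g (update x i t k)) (P k) (x i) := by
    intro k
    rcases eq_or_ne k i with rfl | hk
    · simpa [P] using hg
    · simpa [P, update_of_ne hk, hk] using hasDerivAt_const (x i) (g (x k))
  set d : ι → ℝ := fun j => g (x (j + s)) - g (x j)
  have hshift : ∑ j, d j * P (j + s) = d (i - s) * g' :=
    calc _ = ∑ j, d (j - s) * P j := Fintype.sum_equiv (Equiv.addRight s) _ _ fun j => by simp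
      _ = _ := by simp [P, Pi.single_apply]
  have hself : ∑ j, d j * P j = d i * g' := by simp [P, Pi.single_apply]
  refine (HasDerivAt.fun_sum fun j _ =>
    ((hcoord (j + s)).sub (hcoord j)).fun_pow 2).congr_deriv ?_
  calc _ = ∑ j, 2 * (d j * P (j + s) - d j * P j) :=
        Finset.sum_congr rfl fun j _ => by simp [d]; ring
    _ = 2 * (d (i - s) * g' - d i * g') := by
        rw [← Finset.mul_sum, Finset.sum_sub_distrib, hshift, hself]
    _ = _ := by simp only [d, sub_add_cancel]; ring

noncomputable def schemeEnergy (s : ι) (q γ C : ℝ) (vbar x : ι → ℝ) : ℝ :=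
  ∑ j, sitePotential q (vbar j) (x j) + C / (2 * γ) * ∑ j, (x (j + s) ^ γ - x j ^ γ) ^ 2

variable (s : ι) {q γ C : ℝ} {vbar x : ι → ℝ}

theorem continuousAt_schemeEnergy (hq : 0 < q + 1) (hγ : 0 ≤ γ)
    (hx : ∀ j, vbar j = 0 ∨ 0 < x j) :
    ContinuousAt (schemeEnergy s q γ C vbar) x := by
  have hcoord : ∀ j, Continuous fun y : ι → ℝ => y j ^ γ :=
    fun j => (Real.continuous_rpow_const hγ).comp (continuous_apply j)
  have hsite : ContinuousAt (fun y : ι → ℝ => ∑ j, sitePotential q (vbar j) (y j)) x :=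
    tendsto_finsetSum _ fun j _ => (continuousAt_sitePotential hq (hx j)).comp
      (f := fun y : ι → ℝ => y j) (continuous_apply j).continuousAt
  have hdirichlet : Continuous fun y : ι → ℝ => ∑ j, (y (j + s) ^ γ - y j ^ γ) ^ 2 :=
    continuous_finsetSum _ fun j _ => ((hcoord (j + s)).sub (hcoord j)).pow 2
  exact hsite.add (continuousAt_const.mul hdirichlet.continuousAt)

theorem hasDerivAt_schemeEnergy_update [DecidableEq ι] {θ : ℝ} (hq : γ - θ + 1 ≠ 0)
    (hγ : γ ≠ 0) {i : ι} (hx : 0 < x i) :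
    HasDerivAt (fun t => schemeEnergy s (γ - θ) γ C vbar (update x i t))
      (x i ^ (γ - θ - 1) *
        (x i - vbar i - C * x i ^ θ * (x (i + s) ^ γ - 2 * x i ^ γ + x (i - s) ^ γ))) (x i) := by
  have hsite := hasDerivAt_sum_apply_update (f := fun j => sitePotential (γ - θ) (vbar j))
    (hasDerivAt_sitePotential (vbar i) hq hx)
  have hdirichlet := hasDerivAt_sum_sq_sub_shift_update s (Real.hasDerivAt_rpow_const
    (p := γ) (.inl hx.ne'))
  refine (hsite.add (hdirichlet.const_mul (C / (2 * γ)))).congr_deriv ?_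
  have hsplit : x i ^ (γ - 1) = x i ^ (γ - θ - 1) * x i ^ θ := by
    rw [← Real.rpow_add hx]; ring_nf
  rw [hsplit]
  field_simp
  ring

theorem IsMinOn.scheme_eq_of_schemeEnergy [DecidableEq ι] {θ M : ℝ} {δ : ι → ℝ}
    (hC : 0 ≤ C) (hθγ : θ < γ + 1) (hγ : 0 < γ) (hδ : ∀ j, 0 ≤ δ j)
    (hmin : IsMinOn (schemeEnergy s (γ - θ) γ C vbar) (univ.pi fun j => Icc (δ j) M) x)
    (hx : x ∈ univ.pi fun j => Icc (δ j) M) {i : ι} (hxi : 0 < x i) (hvM : vbar i < M)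
    (hbarrier : 0 < δ i → δ i + 2 * C * δ i ^ (θ + γ) < vbar i) :
    x i - vbar i = C * x i ^ θ * (x (i + s) ^ γ - 2 * x i ^ γ + x (i - s) ^ γ) := by
  have hbox : ∀ j, δ j ≤ x j ∧ x j ≤ M := fun j => hx j (mem_univ j)
  have hnb : ∀ j, 0 ≤ x j ^ γ ∧ x j ^ γ ≤ M ^ γ := fun j =>
    ⟨Real.rpow_nonneg ((hδ j).trans (hbox j).1) γ,
      Real.rpow_le_rpow ((hδ j).trans (hbox j).1) (hbox j).2 hγ.le⟩
  have hweight : 0 < x i ^ (γ - θ - 1) := Real.rpow_pos_of_pos hxi _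
  have hCx : 0 ≤ C * x i ^ θ := mul_nonneg hC (Real.rpow_nonneg hxi.le θ)
  set R := x i - vbar i - C * x i ^ θ * (x (i + s) ^ γ - 2 * x i ^ γ + x (i - s) ^ γ)
  have hlow : x i = δ i → R < 0 := fun hlow => by
    have hlt := hbarrier (hlow ▸ hxi)
    rw [← hlow, Real.rpow_add hxi] at hlt
    nlinarith [(hnb (i + s)).1, (hnb (i - s)).1]
  have hup : x i = M → 0 < R := fun hup => by
    have : 0 ≤ C * x i ^ θ * (2 * x i ^ γ - x (i + s) ^ γ - x (i - s) ^ γ) :=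
      mul_nonneg hCx (by rw [hup]; linarith [(hnb (i + s)).2, (hnb (i - s)).2])
    linarith
  have hcrit : x i ^ (γ - θ - 1) * R = 0 :=
    (hmin.comp_update hx i).hasDerivAt_eq_zero_of_mem_Icc (hbox i)
      (hasDerivAt_schemeEnergy_update s (by linarith) hγ.ne' hxi)
      (fun h => mul_neg_of_pos_of_neg hweight (hlow h)) (fun h => mul_pos hweight (hup h))
  linarith [(mul_eq_zero.1 hcrit).resolve_left hweight.ne']

theorem exists_nonneg_solution_cyclic_scheme (s : ι) {C θ γ : ℝ} (hC : 0 ≤ C) (hθ : 0 < θ)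
    (hθγ : θ < γ + 1) (hγ : 0 < γ) (vbar : ι → ℝ) (hvbar : ∀ i, 0 ≤ vbar i) :
    ∃ v : ι → ℝ, (∀ i, 0 ≤ v i) ∧
      ∀ i, v i - vbar i = C * v i ^ θ * (v (i + s) ^ γ - 2 * v i ^ γ + v (i - s) ^ γ) := by
  classical
  choose δ hδ0 hδle hδpos hbarrier using fun i =>
    exists_lower_barrier (mul_nonneg zero_le_two hC) (add_pos hθ hγ) (hvbar i)
  set M := 1 + ∑ j, vbar j
  have hvM : ∀ j, vbar j < M := fun j => by
    linarith [Finset.single_le_sum (fun k _ => hvbar k) (Finset.mem_univ j)]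
  set box := univ.pi fun j => Icc (δ j) M
  have hcont : ContinuousOn (schemeEnergy s (γ - θ) γ C vbar) box := fun y hy =>
    (continuousAt_schemeEnergy s (by linarith) hγ.le fun j => (hvbar j).eq_or_lt.imp Eq.symm
      fun hv => (hδpos j hv).trans_le (hy j (mem_univ j)).1).continuousWithinAt
  obtain ⟨x, hx, hmin⟩ := (isCompact_univ_pi fun j => isCompact_Icc).exists_isMinOn
    ⟨vbar, fun j _ => ⟨hδle j, (hvM j).le⟩⟩ hcont
  have hx0 : ∀ j, 0 ≤ x j := fun j => (hδ0 j).trans (hx j (mem_univ j)).1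
  refine ⟨x, hx0, fun i => ?_⟩
  rcases (hx0 i).eq_or_lt with hxi | hxi
  · have hvi : vbar i = 0 := (hvbar i).eq_or_lt.elim Eq.symm fun hv =>
      absurd (hx i (mem_univ i)).1 (hxi ▸ (hδpos i hv).not_ge)
    rw [← hxi, hvi, Real.zero_rpow hθ.ne']
    ring
  · exact hmin.scheme_eq_of_schemeEnergy s hC hθγ hγ hδ0 hx hxi (hvM i) (hbarrier i)

end CyclicEnergy

theorem implicit_euler_step_exists_general
    (α β τ : ℝ) (hα : 1 < α) (hβ : 0 < β) (hτ : 0 < τ)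
    (N : ℕ) [NeZero N] (h : ℝ)
    (vbar : Fin N → ℝ) (hvbar : ∀ i, 0 ≤ vbar i) :
    ∃ v : Fin N → ℝ, (∀ i, 0 ≤ v i) ∧
      ∀ i : Fin N,
        v i - vbar i = α * τ / h ^ 2 * v i ^ ((α - 1) / α) *
          (v (i + 1) ^ (β / α) - 2 * v i ^ (β / α) + v (i - 1) ^ (β / α)) := by
  have hα₀ : 0 < α := zero_lt_one.trans hα
  have hθγ : (α - 1) / α < β / α + 1 := by
    rw [div_add_one hα₀.ne']
    exact div_lt_div_of_pos_right (by linarith) hα₀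
  exact exists_nonneg_solution_cyclic_scheme 1 (by positivity) (div_pos (sub_pos.2 hα) hα₀)
    hθγ (div_pos hβ hα₀) vbar hvbar

/-- Existence of a nonnegative solution to one step of the implicit Euler
finite-difference scheme for the porous-medium equation. -/
theorem implicit_euler_step_exists
    (α β τ : ℝ) (hα : 1 < α) (hβ : 0 < β) (hτ : 0 < τ)
    (N : ℕ) [NeZero N] (h : ℝ) (hh : h = 1 / N)
    (vbar : Fin N → ℝ) (hvbar : ∀ i, 0 ≤ vbar i) :
    ∃ v : Fin N → ℝ, (∀ i, 0 ≤ v i) ∧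
      ∀ i : Fin N,
        v i - vbar i = α * τ / h ^ 2 * v i ^ ((α - 1) / α) *
          (v (i + 1) ^ (β / α) - 2 * v i ^ (β / α) + v (i - 1) ^ (β / α)) :=
  implicit_euler_step_exists_general α β τ hα hβ hτ N h vbar hvbar
end

section
/- Let α > 1, β > 0, τ > 0, N ∈ ℕ with N ≥ 1, h = 1/N. Let v, v̄ ∈ ℝ^N have nonnegative entries and suppose v solves one step of the implicit Euler scheme with datum v̄, i.e. with cyclic indices, v_i − v̄_i = (ατ/h²)·v_i^{(α−1)/α}·(v_{i+1}^{β/α} − 2v_i^{β/α} + v_{i−1}^{β/α}) for all i. Then Σ_{i=1}^N (v_i − v̄_i) = −(ατ/h²)·Σ_{i=1}^N (v_{i+1}^{(α−1)/α} − v_i^{(α−1)/α})·(v_{i+1}^{β/α} − v_i^{β/α}) ≤ 0; in particular Σ_{i=1}^N v_i ≤ Σ_{i=1}^N v̄_i. -/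
open Finset

/-- Nonnegativity of the discrete entropy production: summation by parts for
one step of the implicit Euler scheme. -/
theorem implicit_euler_entropy_production
    (α β τ : ℝ) (hα : 1 < α) (hβ : 0 < β) (hτ : 0 < τ)
    (N : ℕ) [NeZero N] (h : ℝ) (hh : h = 1 / N)
    (v vbar : Fin N → ℝ) (hv : ∀ i, 0 ≤ v i) (hvbar : ∀ i, 0 ≤ vbar i)
    (hscheme : ∀ i : Fin N,
      v i - vbar i = α * τ / h ^ 2 * v i ^ ((α - 1) / α) *
        (v (i + 1) ^ (β / α) - 2 * v i ^ (β / α) + v (i - 1) ^ (β / α))) :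
    (∑ i : Fin N, (v i - vbar i)
        = -(α * τ / h ^ 2) * ∑ i : Fin N,
            (v (i + 1) ^ ((α - 1) / α) - v i ^ ((α - 1) / α)) *
            (v (i + 1) ^ (β / α) - v i ^ (β / α))) ∧
      (∑ i : Fin N, (v i - vbar i) ≤ 0) ∧
      ∑ i : Fin N, v i ≤ ∑ i : Fin N, vbar i := by
  set f : Fin N → ℝ := fun i => v i ^ ((α - 1) / α) with hf
  set g : Fin N → ℝ := fun i => v i ^ (β / α) with hg
  set c : ℝ := α * τ / h ^ 2 with hc
  -- positivity of the constant
  have hN : (0 : ℝ) < N := by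
    exact_mod_cast Nat.pos_of_ne_zero (NeZero.ne N)
  have hh0 : 0 < h := by rw [hh]; positivity
  have hc0 : 0 < c := by rw [hc]; positivity
  -- shift lemmas (cyclic sums)
  have h1 : ∑ i : Fin N, f (i + 1) * g (i + 1) = ∑ i : Fin N, f i * g i := by
    have := Equiv.sum_comp (Equiv.addRight (1 : Fin N)) (fun j => f j * g j)
    simpa using this
  have h2 : ∑ i : Fin N, f (i + 1) * g (i + 1 - 1) = ∑ i : Fin N, f i * g (i - 1) := by
    have := Equiv.sum_comp (Equiv.addRight (1 : Fin N)) (fun j => f j * g (j - 1))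
    simpa using this
  have h2' : ∑ i : Fin N, f (i + 1) * g i = ∑ i : Fin N, f i * g (i - 1) := by
    rw [← h2]; exact Finset.sum_congr rfl fun i _ => by rw [add_sub_cancel_right]
  -- summation by parts
  have key : ∑ i : Fin N, f i * (g (i + 1) - 2 * g i + g (i - 1))
      = -∑ i : Fin N, (f (i + 1) - f i) * (g (i + 1) - g i) := by
    rw [eq_neg_iff_add_eq_zero, ← Finset.sum_add_distrib]
    have hpt : ∀ i : Fin N,
        f i * (g (i + 1) - 2 * g i + g (i - 1)) + (f (i + 1) - f i) * (g (i + 1) - g i)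
          = (f (i + 1) * g (i + 1) - f i * g i) + (f i * g (i - 1) - f (i + 1) * g i) := by
      intro i; ring
    rw [Finset.sum_congr rfl fun i _ => hpt i, Finset.sum_add_distrib,
      Finset.sum_sub_distrib, Finset.sum_sub_distrib, h1, ← h2']
    ring
  -- the first equality
  have first : ∑ i : Fin N, (v i - vbar i)
      = -c * ∑ i : Fin N, (f (i + 1) - f i) * (g (i + 1) - g i) := by
    calc ∑ i : Fin N, (v i - vbar i)
        = ∑ i : Fin N, c * (f i * (g (i + 1) - 2 * g i + g (i - 1))) := by
          refine Finset.sum_congr rfl fun i _ => ?_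
          rw [hscheme i]; ring
      _ = c * ∑ i : Fin N, f i * (g (i + 1) - 2 * g i + g (i - 1)) := by
          rw [Finset.mul_sum]
      _ = -c * ∑ i : Fin N, (f (i + 1) - f i) * (g (i + 1) - g i) := by
          rw [key]; ring
  -- nonnegativity of the entropy production terms
  have hterm : ∀ i : Fin N, 0 ≤ (f (i + 1) - f i) * (g (i + 1) - g i) := by
    intro i
    have ha : (0 : ℝ) ≤ (α - 1) / α := by
      apply div_nonneg <;> linarith
    have hb : (0 : ℝ) ≤ β / α := by positivity
    rcases le_total (v i) (v (i + 1)) with hle | hle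
    · have e1 : f i ≤ f (i + 1) := Real.rpow_le_rpow (hv i) hle ha
      have e2 : g i ≤ g (i + 1) := Real.rpow_le_rpow (hv i) hle hb
      exact mul_nonneg (by linarith) (by linarith)
    · have e1 : f (i + 1) ≤ f i := Real.rpow_le_rpow (hv (i + 1)) hle ha
      have e2 : g (i + 1) ≤ g i := Real.rpow_le_rpow (hv (i + 1)) hle hb
      nlinarith [e1, e2]
  have hsum : 0 ≤ ∑ i : Fin N, (f (i + 1) - f i) * (g (i + 1) - g i) :=
    Finset.sum_nonneg fun i _ => hterm i
  have second : ∑ i : Fin N, (v i - vbar i) ≤ 0 := by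
    rw [first]
    nlinarith
  refine ⟨first, second, ?_⟩
  have := Finset.sum_sub_distrib (f := v) (g := vbar) (s := (Finset.univ : Finset (Fin N)))
  linarith [second, this]
end

section
/- Let α > 1, β > 0, N ∈ ℕ with N ≥ 1, h > 0, and let v ∈ ℝ^N have nonnegative entries, with cyclic indices (v_{N+1} := v_1). Set γ := (α+β−1)/(2α), and define P := (α/((α−1)h))·Σ_{i=1}^N (v_{i+1}^{(α−1)/α} − v_i^{(α−1)/α})·(v_{i+1}^{β/α} − v_i^{β/α}) and F := (1/h)·Σ_{i=1}^N (v_{i+1}^γ − v_i^γ)². Then (4αβ/(α+β−1)²)·F ≤ P and P ≤ (α/(α−1))·F. -/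
open Finset

private lemma epfc_core (δ : ℝ) (hδ0 : 0 ≤ δ) (hδ1 : δ ≤ 1) {y : ℝ} (hy : 1 ≤ y) :
    y ^ δ - y ^ (-δ) ≤ δ * (y - y⁻¹) := by
  set f : ℝ → ℝ := fun x => δ * (x - x⁻¹) - (x ^ δ - x ^ (-δ)) with hf
  have hder : ∀ x ∈ Set.Ici (1:ℝ), HasDerivAt f
      (δ * (1 - -(x^2)⁻¹) - (δ * x ^ (δ-1) - -δ * x ^ (-δ-1))) x := by
    intro x hx
    have hx0 : x ≠ 0 := by have : (1:ℝ) ≤ x := hx; positivity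
    have h1 : HasDerivAt (fun y : ℝ => y ^ δ) (δ * x ^ (δ - 1)) x :=
      Real.hasDerivAt_rpow_const (Or.inl hx0)
    have h2 : HasDerivAt (fun y : ℝ => y ^ (-δ)) (-δ * x ^ (-δ - 1)) x :=
      Real.hasDerivAt_rpow_const (Or.inl hx0)
    have h3 : HasDerivAt (fun y : ℝ => y⁻¹) (-(x^2)⁻¹) x := hasDerivAt_inv hx0
    exact (((hasDerivAt_id x).sub h3).const_mul δ).sub (h1.sub h2)
  have hderiv_nonneg : ∀ x ∈ interior (Set.Ici (1:ℝ)), 0 ≤ deriv f x := by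
    intro x hx
    rw [interior_Ici] at hx
    have hx1 : (1:ℝ) ≤ x := le_of_lt hx
    have hx0 : (0:ℝ) < x := lt_of_lt_of_le one_pos hx1
    rw [(hder x hx1).deriv]
    have e1 : x ^ (δ - 1) = x ^ δ / x := by
      rw [Real.rpow_sub hx0, Real.rpow_one]
    have e2 : x ^ (-δ - 1) = x ^ (-δ) / x := by
      rw [Real.rpow_sub hx0, Real.rpow_one]
    have hA : (1:ℝ) ≤ x * x ^ δ :=
      one_le_mul_of_one_le_of_one_le hx1 (Real.one_le_rpow hx1 hδ0)
    have hB : (1:ℝ) ≤ x * x ^ (-δ) := by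
      have : x * x ^ (-δ) = x ^ (1 - δ) := by
        rw [Real.rpow_sub hx0, Real.rpow_one, Real.rpow_neg hx0.le, div_eq_mul_inv]
      rw [this]
      exact Real.one_le_rpow hx1 (by linarith)
    have hN : 0 ≤ x^2 + 1 - x * x^δ - x * x^(-δ) := by
      have hAB : x ^ δ * x ^ (-δ) = 1 := by
        rw [← Real.rpow_add hx0]; simp
      nlinarith [mul_nonneg (sub_nonneg.2 hA) (sub_nonneg.2 hB)]
    have heq : δ * (1 - -(x^2)⁻¹) - (δ * x ^ (δ-1) - -δ * x ^ (-δ-1))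
        = δ * (x^2 + 1 - x * x^δ - x * x^(-δ)) / x^2 := by
      rw [e1, e2]; field_simp; ring
    rw [heq]
    positivity
  have hmono : MonotoneOn f (Set.Ici 1) := by
    apply monotoneOn_of_deriv_nonneg (convex_Ici 1)
    · exact fun x hx => (hder x hx).continuousAt.continuousWithinAt
    · exact fun x hx =>
        ((hder x (interior_subset hx)).differentiableAt).differentiableWithinAt
    · exact hderiv_nonneg
  have h1 := hmono (Set.self_mem_Ici) hy hy
  have hf1 : f 1 = 0 := by simp [hf]
  have : (0:ℝ) ≤ f y := by rw [← hf1]; exact h1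
  simp only [hf] at this
  linarith

private lemma epfc_key (δ : ℝ) (hδ0 : 0 ≤ δ) (hδ1 : δ ≤ 1) {x : ℝ} (hx : 1 ≤ x) :
    (1 - δ^2) * (x - 1)^2 ≤ (x ^ (1+δ) - 1) * (x ^ (1-δ) - 1) := by
  have hx0 : (0:ℝ) < x := lt_of_lt_of_le one_pos hx
  set y : ℝ := x ^ ((1:ℝ)/2) with hy
  have hy1 : (1:ℝ) ≤ y := Real.one_le_rpow hx (by norm_num)
  have hy0 : (0:ℝ) < y := lt_of_lt_of_le one_pos hy1
  have e0 : y * y = x := by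
    rw [hy, ← Real.rpow_add hx0]; norm_num
  set A : ℝ := y ^ δ with hA
  set B : ℝ := y ^ (-δ) with hB
  have hA1 : (1:ℝ) ≤ A := Real.one_le_rpow hy1 hδ0
  have hB1 : B ≤ 1 := Real.rpow_le_one_of_one_le_of_nonpos hy1 (by linarith)
  have hB0 : 0 < B := Real.rpow_pos_of_pos hy0 _
  have hAB : A * B = 1 := by rw [hA, hB, ← Real.rpow_add hy0]; simp
  have hyinv : y * y⁻¹ = 1 := mul_inv_cancel₀ hy0.ne'
  have hcore : A - B ≤ δ * (y - y⁻¹) := epfc_core δ hδ0 hδ1 hy1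
  have hsq : (A - B)^2 ≤ (δ * (y - y⁻¹))^2 := by
    apply pow_le_pow_left₀ (by linarith) hcore
  have e1 : x ^ (1+δ) = (y*y) * (A*A) := by
    rw [Real.rpow_add hx0, Real.rpow_one, hA, ← e0, Real.mul_rpow hy0.le hy0.le]
  have e2 : x ^ (1-δ) = (y*y) * (B*B) := by
    rw [show (1:ℝ) - δ = 1 + (-δ) by ring, Real.rpow_add hx0, Real.rpow_one, hB,
      ← e0, Real.mul_rpow hy0.le hy0.le]
  rw [e1, e2, ← e0]
  have step1 : y*y*(A-B)^2 ≤ y*y*((δ*(y-y⁻¹))^2) :=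
    mul_le_mul_of_nonneg_left hsq (by positivity)
  have hh : y*(y-y⁻¹) = y*y - 1 := by rw [mul_sub, hyinv]
  have step2 : y*y*((δ*(y-y⁻¹))^2) = δ^2 * (y*(y-y⁻¹))^2 := by ring
  rw [hh] at step2
  have step3 : (y*y*(A*A)-1)*(y*y*(B*B)-1) = (y*y-1)^2 - y*y*(A-B)^2 := by
    linear_combination ((y*y)^2*(A*B+1) - 2*(y*y)) * hAB
  rw [step3]
  nlinarith [step1, step2]

private lemma epfc_key2 (δ : ℝ) (hδ0 : 0 ≤ δ) (hδ1 : δ < 1) {X Y : ℝ}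
    (hY : 0 ≤ Y) (hXY : Y ≤ X) :
    (1 - δ^2) * (X - Y)^2 ≤ (X ^ (1+δ) - Y ^ (1+δ)) * (X ^ (1-δ) - Y ^ (1-δ)) := by
  have hX : 0 ≤ X := le_trans hY hXY
  rcases eq_or_lt_of_le hY with h0 | hY0
  · -- Y = 0
    subst h0
    rw [Real.zero_rpow (by intro hc; linarith : (1:ℝ)+δ ≠ 0),
      Real.zero_rpow (by intro hc; linarith : (1:ℝ)-δ ≠ 0)]
    have hXX : X ^ (1+δ) * X ^ (1-δ) = X * X := by
      rw [← Real.rpow_add' hX (by intro hc; linarith),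
        show ((1:ℝ)+δ)+(1-δ) = ((2:ℕ):ℝ) by push_cast; ring, Real.rpow_natCast]
      ring
    nlinarith [hXX, sq_nonneg (δ*X), sq_nonneg X]
  · have hx1 : (1:ℝ) ≤ X / Y := (one_le_div hY0).2 hXY
    have hkey := epfc_key δ hδ0 hδ1.le hx1
    have d1 : (X/Y) ^ (1+δ) = X ^ (1+δ) / Y ^ (1+δ) := Real.div_rpow hX hY _
    have d2 : (X/Y) ^ (1-δ) = X ^ (1-δ) / Y ^ (1-δ) := Real.div_rpow hX hY _
    have hY1p : 0 < Y ^ (1+δ) := Real.rpow_pos_of_pos hY0 _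
    have hY1m : 0 < Y ^ (1-δ) := Real.rpow_pos_of_pos hY0 _
    have hYY : Y ^ (1+δ) * Y ^ (1-δ) = Y * Y := by
      rw [← Real.rpow_add' hY (by intro hc; linarith),
        show ((1:ℝ)+δ)+(1-δ) = ((2:ℕ):ℝ) by push_cast; ring, Real.rpow_natCast]
      ring
    have H := mul_le_mul_of_nonneg_right hkey (mul_pos hY1p hY1m).le
    rw [d1, d2] at H
    have hq : (X/Y - 1) * Y = X - Y := by field_simp
    have hq1 : (X ^ (1+δ) / Y ^ (1+δ) - 1) * Y ^ (1+δ) = X ^ (1+δ) - Y ^ (1+δ) := by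
      field_simp
    have hq2 : (X ^ (1-δ) / Y ^ (1-δ) - 1) * Y ^ (1-δ) = X ^ (1-δ) - Y ^ (1-δ) := by
      field_simp
    have id1 : (1 - δ^2) * (X/Y - 1)^2 * (Y ^ (1+δ) * Y ^ (1-δ))
        = (1 - δ^2) * (X - Y)^2 := by
      rw [hYY]
      linear_combination ((1-δ^2)*((X/Y-1)*Y + (X-Y))) * hq
    have id2 : (X ^ (1+δ) / Y ^ (1+δ) - 1) * (X ^ (1-δ) / Y ^ (1-δ) - 1)
        * (Y ^ (1+δ) * Y ^ (1-δ))
        = (X ^ (1+δ) - Y ^ (1+δ)) * (X ^ (1-δ) - Y ^ (1-δ)) := by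
      linear_combination ((X ^ (1-δ) / Y ^ (1-δ) - 1) * Y ^ (1-δ)) * hq1
        + (X ^ (1+δ) - Y ^ (1+δ)) * hq2
    rw [id1, id2] at H
    exact H

private lemma epfc_lower_aux (p q : ℝ) (hp : 0 < p) (hq : 0 < q) (hqp : q ≤ p)
    (a b : ℝ) (hb : 0 ≤ b) (hba : b ≤ a) :
    4*p*q/(p+q)^2 * (a^((p+q)/2) - b^((p+q)/2))^2 ≤ (a^p - b^p) * (a^q - b^q) := by
  have hpq : 0 < p + q := by linarith
  have ha : 0 ≤ a := le_trans hb hba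
  set δ := (p-q)/(p+q) with hδ
  have hδ0 : 0 ≤ δ := div_nonneg (by linarith) hpq.le
  have hδ1 : δ < 1 := by rw [hδ, div_lt_one hpq]; linarith
  have hXY : b ^ ((p+q)/2) ≤ a ^ ((p+q)/2) :=
    Real.rpow_le_rpow hb hba (by positivity)
  have hY : 0 ≤ b ^ ((p+q)/2) := Real.rpow_nonneg hb _
  have H := epfc_key2 δ hδ0 hδ1 hY hXY
  have he1 : (p+q)/2 * (1+δ) = p := by rw [hδ]; field_simp; ring
  have he2 : (p+q)/2 * (1-δ) = q := by rw [hδ]; field_simp; ring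
  have ea1 : (a ^ ((p+q)/2)) ^ (1+δ) = a ^ p := by
    rw [← Real.rpow_mul ha, he1]
  have ea2 : (a ^ ((p+q)/2)) ^ (1-δ) = a ^ q := by
    rw [← Real.rpow_mul ha, he2]
  have eb1 : (b ^ ((p+q)/2)) ^ (1+δ) = b ^ p := by
    rw [← Real.rpow_mul hb, he1]
  have eb2 : (b ^ ((p+q)/2)) ^ (1-δ) = b ^ q := by
    rw [← Real.rpow_mul hb, he2]
  have hcoef : 1 - δ^2 = 4*p*q/(p+q)^2 := by rw [hδ]; field_simp; ring
  rw [ea1, ea2, eb1, eb2, hcoef] at H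
  exact H

private lemma epfc_lower (p q : ℝ) (hp : 0 < p) (hq : 0 < q)
    (a b : ℝ) (ha : 0 ≤ a) (hb : 0 ≤ b) :
    4*p*q/(p+q)^2 * (a^((p+q)/2) - b^((p+q)/2))^2 ≤ (a^p - b^p) * (a^q - b^q) := by
  rcases le_total q p with hqp | hpq
  · rcases le_total b a with hba | hab
    · exact epfc_lower_aux p q hp hq hqp a b hb hba
    · have H := epfc_lower_aux p q hp hq hqp b a ha hab
      calc 4*p*q/(p+q)^2 * (a^((p+q)/2) - b^((p+q)/2))^2
          = 4*p*q/(p+q)^2 * (b^((p+q)/2) - a^((p+q)/2))^2 := by ring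
        _ ≤ (b^p - a^p) * (b^q - a^q) := H
        _ = (a^p - b^p) * (a^q - b^q) := by ring
  · rcases le_total b a with hba | hab
    · have H := epfc_lower_aux q p hq hp hpq a b hb hba
      rw [add_comm q p] at H
      calc 4*p*q/(p+q)^2 * (a^((p+q)/2) - b^((p+q)/2))^2
          = 4*q*p/(p+q)^2 * (a^((p+q)/2) - b^((p+q)/2))^2 := by ring
        _ ≤ (a^q - b^q) * (a^p - b^p) := H
        _ = (a^p - b^p) * (a^q - b^q) := by ring
    · have H := epfc_lower_aux q p hq hp hpq b a ha hab
      rw [add_comm q p] at H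
      calc 4*p*q/(p+q)^2 * (a^((p+q)/2) - b^((p+q)/2))^2
          = 4*q*p/(p+q)^2 * (b^((p+q)/2) - a^((p+q)/2))^2 := by ring
        _ ≤ (b^q - a^q) * (b^p - a^p) := H
        _ = (a^p - b^p) * (a^q - b^q) := by ring

private lemma epfc_upper (p q : ℝ) (hp : 0 < p) (hq : 0 < q)
    (a b : ℝ) (ha : 0 ≤ a) (hb : 0 ≤ b) :
    (a^p - b^p) * (a^q - b^q) ≤ (a^((p+q)/2) - b^((p+q)/2))^2 := by
  have hpq : p + q ≠ 0 := by positivity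
  have hpne : p/2 + p/2 ≠ 0 := fun hc => hp.ne' (by linarith)
  have hqne : q/2 + q/2 ≠ 0 := fun hc => hq.ne' (by linarith)
  have hpqne : p/2 + q/2 ≠ 0 := fun hc => hpq (by linarith)
  have hqpne : q/2 + p/2 ≠ 0 := fun hc => hpq (by linarith)
  have hmidne : (p+q)/2 + (p+q)/2 ≠ 0 := fun hc => hpq (by linarith)
  have half : ∀ x : ℝ, 0 ≤ x → ∀ r s : ℝ, r + s ≠ 0 → x^r * x^s = x^(r+s) :=
    fun x hx r s hrs => (Real.rpow_add' hx hrs).symm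
  have haa : a^p * a^q = a^((p+q)/2) * a^((p+q)/2) := by
    rw [half a ha p q hpq, half a ha _ _ hmidne]
    congr 1; ring
  have hbb : b^p * b^q = b^((p+q)/2) * b^((p+q)/2) := by
    rw [half b hb p q hpq, half b hb _ _ hmidne]
    congr 1; ring
  set s : ℝ := a^(p/2) * b^(q/2) with hs
  set t : ℝ := a^(q/2) * b^(p/2) with ht
  have hss : s * s = a^p * b^q := by
    rw [hs, mul_mul_mul_comm, half a ha _ _ hpne, half b hb _ _ hqne,
      show p/2 + p/2 = p by ring, show q/2 + q/2 = q by ring]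
  have htt : t * t = a^q * b^p := by
    rw [ht, mul_mul_mul_comm, half a ha _ _ hqne, half b hb _ _ hpne,
      show p/2 + p/2 = p by ring, show q/2 + q/2 = q by ring]
  have hst : s * t = a^((p+q)/2) * b^((p+q)/2) := by
    rw [hs, ht, mul_mul_mul_comm, half a ha _ _ hpqne, half b hb _ _ hqpne]
    rw [show p/2 + q/2 = (p+q)/2 by ring, show q/2 + p/2 = (p+q)/2 by ring]
  have h2 : 2 * (s * t) ≤ s * s + t * t := by nlinarith [sq_nonneg (s - t)]
  rw [hss, htt, hst] at h2
  nlinarith [h2, haa, hbb]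

/-- Two-sided comparison between the discrete entropy production and the
discrete Fisher information. -/
theorem entropy_production_fisher_comparison
    (α β : ℝ) (hα : 1 < α) (hβ : 0 < β)
    (N : ℕ) [NeZero N] (h : ℝ) (hh : 0 < h)
    (v : Fin N → ℝ) (hv : ∀ i, 0 ≤ v i)
    (γ P F : ℝ) (hγ : γ = (α + β - 1) / (2 * α))
    (hP : P = α / ((α - 1) * h) * ∑ i : Fin N,
      (v (i + 1) ^ ((α - 1) / α) - v i ^ ((α - 1) / α)) *
      (v (i + 1) ^ (β / α) - v i ^ (β / α)))
    (hF : F = 1 / h * ∑ i : Fin N, (v (i + 1) ^ γ - v i ^ γ) ^ 2) :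
    4 * α * β / (α + β - 1) ^ 2 * F ≤ P ∧ P ≤ α / (α - 1) * F := by
  have hα0 : (0:ℝ) < α := by linarith
  have hα1 : (0:ℝ) < α - 1 := by linarith
  have hαβ : (0:ℝ) < α + β - 1 := by linarith
  set p : ℝ := (α - 1) / α with hpdef
  set q : ℝ := β / α with hqdef
  have hp : 0 < p := div_pos hα1 hα0
  have hq : 0 < q := div_pos hβ hα0
  have hγ2 : γ = (p + q) / 2 := by
    rw [hγ, hpdef, hqdef]; field_simp; ring
  have hC : 0 < α / ((α - 1) * h) := div_pos hα0 (mul_pos hα1 hh)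
  have hTS : (∑ i : Fin N, (v (i + 1) ^ p - v i ^ p) * (v (i + 1) ^ q - v i ^ q))
      ≤ ∑ i : Fin N, (v (i + 1) ^ γ - v i ^ γ) ^ 2 := by
    apply Finset.sum_le_sum
    intro i _
    rw [hγ2]
    exact epfc_upper p q hp hq _ _ (hv _) (hv _)
  have hST : 4*p*q/(p+q)^2 * (∑ i : Fin N, (v (i + 1) ^ γ - v i ^ γ) ^ 2)
      ≤ ∑ i : Fin N, (v (i + 1) ^ p - v i ^ p) * (v (i + 1) ^ q - v i ^ q) := by
    rw [Finset.mul_sum]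
    apply Finset.sum_le_sum
    intro i _
    rw [hγ2]
    exact epfc_lower p q hp hq _ _ (hv _) (hv _)
  have hcoef1 : α / ((α - 1) * h) * (4*p*q/(p+q)^2) = 4 * α * β / (α + β - 1) ^ 2 * (1/h) := by
    rw [hpdef, hqdef]
    field_simp
    ring
  have hcoef2 : α / ((α - 1) * h) = α / (α - 1) * (1 / h) := by
    field_simp
  constructor
  · rw [hP, hF]
    calc 4 * α * β / (α + β - 1) ^ 2 *
          (1 / h * ∑ i : Fin N, (v (i + 1) ^ γ - v i ^ γ) ^ 2)
        = α / ((α - 1) * h) *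
          (4*p*q/(p+q)^2 * ∑ i : Fin N, (v (i + 1) ^ γ - v i ^ γ) ^ 2) := by
          linear_combination (-(∑ i : Fin N, (v (i + 1) ^ γ - v i ^ γ) ^ 2)) * hcoef1
      _ ≤ α / ((α - 1) * h) *
          ∑ i : Fin N, (v (i + 1) ^ p - v i ^ p) * (v (i + 1) ^ q - v i ^ q) :=
          mul_le_mul_of_nonneg_left hST hC.le
  · rw [hP, hF]
    calc α / ((α - 1) * h) *
          ∑ i : Fin N, (v (i + 1) ^ p - v i ^ p) * (v (i + 1) ^ q - v i ^ q)
        ≤ α / ((α - 1) * h) * ∑ i : Fin N, (v (i + 1) ^ γ - v i ^ γ) ^ 2 :=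
          mul_le_mul_of_nonneg_left hTS hC.le
      _ = α / (α - 1) * (1 / h * ∑ i : Fin N, (v (i + 1) ^ γ - v i ^ γ) ^ 2) := by
          linear_combination (∑ i : Fin N, (v (i + 1) ^ γ - v i ^ γ) ^ 2) * hcoef2
end

section
/- Let 1/2 ≤ γ ≤ 1, let x, y > 0 and a, b ∈ ℝ. Then γ·(x^{γ−1}a − y^{γ−1}b)² + (γ−1)·(x^γ − y^γ)·(x^{γ−2}a² − y^{γ−2}b²) ≥ 0. -/
/-- Pointwise nonnegativity of the quadratic form in the second derivative of
the discrete Fisher information. -/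
theorem quadratic_form_nonneg
    (γ : ℝ) (hγ1 : 1 / 2 ≤ γ) (hγ2 : γ ≤ 1)
    (x y : ℝ) (hx : 0 < x) (hy : 0 < y) (a b : ℝ) :
    0 ≤ γ * (x ^ (γ - 1) * a - y ^ (γ - 1) * b) ^ 2
        + (γ - 1) * (x ^ γ - y ^ γ) * (x ^ (γ - 2) * a ^ 2 - y ^ (γ - 2) * b ^ 2) := by
  have hP : (0:ℝ) < x ^ (γ - 2) := Real.rpow_pos_of_pos hx _
  have hQ : (0:ℝ) < y ^ (γ - 2) := Real.rpow_pos_of_pos hy _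
  have hx1 : x ^ (γ - 1) = x ^ (γ - 2) * x := by
    rw [← Real.rpow_add_one hx.ne']; ring_nf
  have hy1 : y ^ (γ - 1) = y ^ (γ - 2) * y := by
    rw [← Real.rpow_add_one hy.ne']; ring_nf
  have hx2 : x ^ γ = x ^ (γ - 2) * x ^ 2 := by
    have : x ^ γ = x ^ (γ - 2 + 2) := by norm_num
    rw [this, Real.rpow_add hx, Real.rpow_two]
  have hy2 : y ^ γ = y ^ (γ - 2) * y ^ 2 := by
    have : y ^ γ = y ^ (γ - 2 + 2) := by norm_num
    rw [this, Real.rpow_add hy, Real.rpow_two]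
  set P := x ^ (γ - 2)
  set Q := y ^ (γ - 2)
  rw [hx1, hy1, hx2, hy2]
  have key : γ * (P * x * a - Q * y * b) ^ 2
      + (γ - 1) * (P * x ^ 2 - Q * y ^ 2) * (P * a ^ 2 - Q * b ^ 2)
      = (2 * γ - 1) * (P * x * a - Q * y * b) ^ 2
        + (1 - γ) * (P * Q) * (x * b - y * a) ^ 2 := by ring
  rw [key]
  have h1 : (0:ℝ) ≤ 2 * γ - 1 := by linarith
  have h2 : (0:ℝ) ≤ 1 - γ := by linarith
  positivity
end

section
/- Let 1/2 ≤ γ ≤ 1, N ∈ ℕ with N ≥ 1, h > 0, and let v, v̄ ∈ ℝ^N have strictly positive entries, with cyclic indices (v_{N+1} := v_1, v̄_{N+1} := v̄_1). Then (1/h)·Σ_{i=1}^N [(v_{i+1}^γ − v_i^γ)² − (v̄_{i+1}^γ − v̄_i^γ)²] ≤ (2γ/h)·Σ_{i=1}^N (v_{i+1}^γ − v_i^γ)·(v_{i+1}^{γ−1}(v_{i+1} − v̄_{i+1}) − v_i^{γ−1}(v_i − v̄_i)). -/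
open Finset Set

/-!
Each summand is the tangent inequality `φ(x, y) - φ(x̄, ȳ) ≤ ∇φ(x, y) · (x - x̄, y - ȳ)` for
`φ(x, y) = (x ^ γ - y ^ γ) ^ 2`, which is convex on the open positive quadrant when
`1 / 2 ≤ γ ≤ 1`. Along a segment, the second derivative of `φ` at `(x, y)` in direction
`(dx, dy)` is `2 γ` times a quadratic form in the relative increments `dx / x`, `dy / y`
with coefficients built from `x ^ γ` and `y ^ γ`; this form is positive semidefinite
because `(2γ - 1)(1 - γ) ≥ 0`.
-/

theorem add_mul_sub_le_of_hasDerivAt_of_deriv2_nonneg {f f' f'' : ℝ → ℝ} {a b : ℝ} (hab : a < b)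
    (hf : ∀ t ∈ Icc a b, HasDerivAt f (f' t) t) (hf' : ∀ t ∈ Ioo a b, HasDerivAt f' (f'' t) t)
    (hf'' : ∀ t ∈ Ioo a b, 0 ≤ f'' t) :
    f a + f' a * (b - a) ≤ f b := by
  have hconv : ConvexOn ℝ (Icc a b) f := by
    refine convexOn_of_hasDerivWithinAt2_nonneg (f' := f') (f'' := f'') (convex_Icc a b)
      (fun t ht => (hf t ht).continuousAt.continuousWithinAt) ?_ ?_ ?_ <;> rw [interior_Icc]
    · exact fun t ht => (hf t (Ioo_subset_Icc_self ht)).hasDerivWithinAt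
    · exact fun t ht => (hf' t ht).hasDerivWithinAt
    · exact hf''
  have hslope := hconv.le_slope_of_hasDerivAt (left_mem_Icc.2 hab.le) (right_mem_Icc.2 hab.le)
    hab (hf a (left_mem_Icc.2 hab.le))
  rw [slope_def_field, le_div_iff₀ (sub_pos.2 hab)] at hslope
  linarith

theorem hessian_form_nonneg {γ a b α β : ℝ} (hγ1 : 1 / 2 ≤ γ) (hγ2 : γ ≤ 1)
    (ha : 0 < a) (hb : 0 < b) :
    0 ≤ γ ^ 2 * (a * α - b * β) ^ 2 + γ * (γ - 1) * (a - b) * (a * α ^ 2 - b * β ^ 2) := by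
  set A := a * ((2 * γ - 1) * a + (1 - γ) * b)
  have hA : 0 < A := by
    have : 0 < (2 * γ - 1) * a + (1 - γ) * b := by
      rcases le_total a b with hab | hab <;> nlinarith
    positivity
  -- `γ A` is the `α²`-coefficient; completing the square leaves
  -- `γ a b (2γ - 1)(1 - γ)(a - b)² β²`.
  have hsquare :
      A * (γ ^ 2 * (a * α - b * β) ^ 2 + γ * (γ - 1) * (a - b) * (a * α ^ 2 - b * β ^ 2))
        = γ * ((A * α - γ * a * b * β) ^ 2
          + a * b * (2 * γ - 1) * (1 - γ) * (a - b) ^ 2 * β ^ 2) := by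
    ring
  refine nonneg_of_mul_nonneg_right (hsquare ▸ ?_) hA
  have : 0 ≤ 2 * γ - 1 := by linarith
  have : 0 ≤ 1 - γ := by linarith
  positivity

theorem second_deriv_sq_rpow_sub_rpow_nonneg {γ x y dx dy : ℝ} (hγ1 : 1 / 2 ≤ γ) (hγ2 : γ ≤ 1)
    (hx : 0 < x) (hy : 0 < y) :
    0 ≤ (dx * γ * x ^ (γ - 1) - dy * γ * y ^ (γ - 1)) ^ 2 + (x ^ γ - y ^ γ)
      * (dx ^ 2 * γ * (γ - 1) * x ^ (γ - 2) - dy ^ 2 * γ * (γ - 1) * y ^ (γ - 2)) := by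
  have hform := hessian_form_nonneg (α := dx / x) (β := dy / y) hγ1 hγ2
    (Real.rpow_pos_of_pos hx γ) (Real.rpow_pos_of_pos hy γ)
  rw [Real.rpow_sub hx, Real.rpow_sub hy, Real.rpow_sub hx, Real.rpow_sub hy, Real.rpow_one,
    Real.rpow_one, Real.rpow_two, Real.rpow_two]
  convert hform using 1
  field_simp

theorem hasDerivAt_add_mul_rpow (p : ℝ) {x dx t : ℝ} (hpos : 0 < x + t * dx) :
    HasDerivAt (fun s => (x + s * dx) ^ p) (dx * p * (x + t * dx) ^ (p - 1)) t :=
  (((hasDerivAt_id t).mul_const dx).const_add x).rpow_const (Or.inl hpos.ne') |>.congr_deriv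
    (by simp)

theorem sq_rpow_sub_rpow_sub_sq_le {γ x y xb yb : ℝ} (hγ1 : 1 / 2 ≤ γ) (hγ2 : γ ≤ 1)
    (hx : 0 < x) (hy : 0 < y) (hxb : 0 < xb) (hyb : 0 < yb) :
    (x ^ γ - y ^ γ) ^ 2 - (xb ^ γ - yb ^ γ) ^ 2
      ≤ 2 * γ * ((x ^ γ - y ^ γ) * (x ^ (γ - 1) * (x - xb) - y ^ (γ - 1) * (y - yb))) := by
  set dx := xb - x
  set dy := yb - y
  have hpos : ∀ t ∈ Icc (0 : ℝ) 1, 0 < x + t * dx ∧ 0 < y + t * dy := fun t ht =>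
    ⟨(convex_Ioi (0 : ℝ)).add_smul_sub_mem hx hxb ht,
      (convex_Ioi (0 : ℝ)).add_smul_sub_mem hy hyb ht⟩
  have hf : ∀ t ∈ Icc (0 : ℝ) 1, HasDerivAt (fun s => ((x + s * dx) ^ γ - (y + s * dy) ^ γ) ^ 2)
      (2 * ((x + t * dx) ^ γ - (y + t * dy) ^ γ)
        * (dx * γ * (x + t * dx) ^ (γ - 1) - dy * γ * (y + t * dy) ^ (γ - 1))) t := fun t ht =>
    ((hasDerivAt_add_mul_rpow γ (hpos t ht).1).sub (hasDerivAt_add_mul_rpow γ (hpos t ht).2)).pow 2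
      |>.congr_deriv (by simp)
  have hf' : ∀ t ∈ Ioo (0 : ℝ) 1, HasDerivAt (fun s => 2 * ((x + s * dx) ^ γ - (y + s * dy) ^ γ)
        * (dx * γ * (x + s * dx) ^ (γ - 1) - dy * γ * (y + s * dy) ^ (γ - 1)))
      (2 * ((dx * γ * (x + t * dx) ^ (γ - 1) - dy * γ * (y + t * dy) ^ (γ - 1)) ^ 2
        + ((x + t * dx) ^ γ - (y + t * dy) ^ γ) * (dx ^ 2 * γ * (γ - 1) * (x + t * dx) ^ (γ - 2)
          - dy ^ 2 * γ * (γ - 1) * (y + t * dy) ^ (γ - 2)))) t := by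
    intro t ht
    obtain ⟨hX, hY⟩ := hpos t (Ioo_subset_Icc_self ht)
    have h := (((hasDerivAt_add_mul_rpow γ hX).sub (hasDerivAt_add_mul_rpow γ hY)).const_mul 2).mul
      (((hasDerivAt_add_mul_rpow (γ - 1) hX).const_mul (dx * γ)).sub
        ((hasDerivAt_add_mul_rpow (γ - 1) hY).const_mul (dy * γ)))
    rw [show γ - 1 - 1 = γ - 2 by ring] at h
    exact h.congr_deriv (by simp only [Pi.sub_apply]; ring)
  have key := add_mul_sub_le_of_hasDerivAt_of_deriv2_nonneg one_pos hf hf' fun t ht =>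
    have ht' := hpos t (Ioo_subset_Icc_self ht)
    mul_nonneg zero_le_two (second_deriv_sq_rpow_sub_rpow_nonneg hγ1 hγ2 ht'.1 ht'.2)
  simp only [zero_mul, add_zero, one_mul, sub_zero, mul_one, dx, dy, add_sub_cancel] at key
  linarith

/-- Concavity estimate: the difference of discrete Fisher informations is
bounded above by its linearization. -/
theorem fisher_difference_linearization
    (γ : ℝ) (hγ1 : 1 / 2 ≤ γ) (hγ2 : γ ≤ 1)
    (N : ℕ) [NeZero N] (h : ℝ) (hh : 0 < h)
    (v vbar : Fin N → ℝ) (hv : ∀ i, 0 < v i) (hvbar : ∀ i, 0 < vbar i) :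
    1 / h * ∑ i : Fin N,
        ((v (i + 1) ^ γ - v i ^ γ) ^ 2 - (vbar (i + 1) ^ γ - vbar i ^ γ) ^ 2)
      ≤ 2 * γ / h * ∑ i : Fin N,
          (v (i + 1) ^ γ - v i ^ γ) *
          (v (i + 1) ^ (γ - 1) * (v (i + 1) - vbar (i + 1))
            - v i ^ (γ - 1) * (v i - vbar i)) := by
  calc _ ≤ 1 / h * ∑ i : Fin N, 2 * γ * ((v (i + 1) ^ γ - v i ^ γ) *
          (v (i + 1) ^ (γ - 1) * (v (i + 1) - vbar (i + 1)) - v i ^ (γ - 1) * (v i - vbar i))) := by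
        gcongr with i
        exact sq_rpow_sub_rpow_sub_sq_le hγ1 hγ2 (hv _) (hv _) (hvbar _) (hvbar _)
    _ = _ := by rw [← mul_sum]; ring
end

section
/- Let α > 1, β > 0, τ > 0, N ∈ ℕ with N ≥ 1, h = 1/N. Let v, v̄ ∈ ℝ^N have strictly positive entries and suppose v solves one step of the implicit Euler scheme with datum v̄, i.e. with cyclic indices, v_i − v̄_i = (ατ/h²)·v_i^{(α−1)/α}·(v_{i+1}^{β/α} − 2v_i^{β/α} + v_{i−1}^{β/α}) for all i. Then Σ_{i=1}^N v_i^{1/α} ≥ Σ_{i=1}^N v̄_i^{1/α}, i.e. the total mass of u_i = v_i^{1/α} does not decrease in one time step. -/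
/-!
By concavity of `t ↦ t ^ (1 / α)`,
`v̄ᵢ ^ (1 / α) ≤ vᵢ ^ (1 / α) + (1 / α) vᵢ ^ (1 / α - 1) (v̄ᵢ - vᵢ)`.
The factor `vᵢ ^ (1 / α - 1)` is the inverse of the mobility `vᵢ ^ ((α - 1) / α)` of the
scheme, so the correction terms are a common multiple of the cyclic second differences of
`v ^ (β / α)`, which sum to zero.
-/

open Finset

theorem Real.rpow_le_rpow_add_mul_rpow_sub_one_mul_sub {x y p : ℝ} (hx : 0 < x) (hy : 0 ≤ y)
    (hp0 : 0 ≤ p) (hp1 : p ≤ 1) : y ^ p ≤ x ^ p + p * x ^ (p - 1) * (y - x) := by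
  have bernoulli := rpow_one_add_le_one_add_mul_self
    (by linarith [div_nonneg hy hx.le] : -1 ≤ y / x - 1) hp0 hp1
  rw [add_sub_cancel, Real.div_rpow hy hx.le, div_le_iff₀ (Real.rpow_pos_of_pos hx p)]
    at bernoulli
  calc y ^ p ≤ (1 + p * (y / x - 1)) * x ^ p := bernoulli
    _ = x ^ p + p * x ^ (p - 1) * (y - x) := by
      rw [Real.rpow_sub_one hx.ne']
      field_simp

theorem Fin.sum_cyclic_second_difference_eq_zero {R : Type*} [NonAssocRing R] {N : ℕ} [NeZero N]
    (f : Fin N → R) : ∑ i, (f (i + 1) - 2 * f i + f (i - 1)) = 0 := by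
  have shift_up : ∑ i, f (i + 1) = ∑ i, f i :=
    Fintype.sum_equiv (.addRight 1) _ _ fun _ ↦ rfl
  have shift_down : ∑ i, f (i - 1) = ∑ i, f i :=
    Fintype.sum_equiv (.subRight 1) _ _ fun _ ↦ rfl
  rw [sum_add_distrib, sum_sub_distrib, ← mul_sum, two_mul, shift_up, shift_down]
  abel

theorem implicit_euler_mass_nondecreasing_general
    (α β τ : ℝ) (hα : 1 < α)
    (N : ℕ) [NeZero N] (h : ℝ)
    (v vbar : Fin N → ℝ) (hv : ∀ i, 0 < v i) (hvbar : ∀ i, 0 < vbar i)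
    (hscheme : ∀ i : Fin N,
      v i - vbar i = α * τ / h ^ 2 * v i ^ ((α - 1) / α) *
        (v (i + 1) ^ (β / α) - 2 * v i ^ (β / α) + v (i - 1) ^ (β / α))) :
    ∑ i : Fin N, vbar i ^ (1 / α) ≤ ∑ i : Fin N, v i ^ (1 / α) := by
  have hα0 : 0 < α := by linarith
  set p : ℝ := 1 / α with hp
  have hp0 : 0 ≤ p := by positivity
  have hp1 : p ≤ 1 := by rw [hp, div_le_one hα0]; exact hα.le
  have tangent_term : ∀ i, p * v i ^ (p - 1) * (vbar i - v i) = -(p * (α * τ / h ^ 2)) *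
      (v (i + 1) ^ (β / α) - 2 * v i ^ (β / α) + v (i - 1) ^ (β / α)) := by
    intro i
    have hexp : (α - 1) / α = -(p - 1) := by rw [hp]; field_simp; ring
    have hcancel : v i ^ (p - 1) * v i ^ ((α - 1) / α) = 1 := by
      rw [hexp, Real.rpow_neg (hv i).le, mul_inv_cancel₀ (Real.rpow_pos_of_pos (hv i) _).ne']
    linear_combination (-p * v i ^ (p - 1)) * hscheme i - p * (α * τ / h ^ 2) *
      (v (i + 1) ^ (β / α) - 2 * v i ^ (β / α) + v (i - 1) ^ (β / α)) * hcancel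
  calc ∑ i, vbar i ^ p ≤ ∑ i, (v i ^ p + p * v i ^ (p - 1) * (vbar i - v i)) :=
        sum_le_sum fun i _ ↦
          Real.rpow_le_rpow_add_mul_rpow_sub_one_mul_sub (hv i) (hvbar i).le hp0 hp1
    _ = ∑ i, v i ^ p := by
        simp only [tangent_term]
        rw [sum_add_distrib, ← mul_sum,
          Fin.sum_cyclic_second_difference_eq_zero fun i ↦ v i ^ (β / α), mul_zero, add_zero]

/-- The total mass of u = v^{1/α} does not decrease along one step of the
implicit Euler scheme. -/
theorem implicit_euler_mass_nondecreasing
    (α β τ : ℝ) (hα : 1 < α) (hβ : 0 < β) (hτ : 0 < τ)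
    (N : ℕ) [NeZero N] (h : ℝ) (hh : h = 1 / N)
    (v vbar : Fin N → ℝ) (hv : ∀ i, 0 < v i) (hvbar : ∀ i, 0 < vbar i)
    (hscheme : ∀ i : Fin N,
      v i - vbar i = α * τ / h ^ 2 * v i ^ ((α - 1) / α) *
        (v (i + 1) ^ (β / α) - 2 * v i ^ (β / α) + v (i - 1) ^ (β / α))) :
    ∑ i : Fin N, vbar i ^ (1 / α) ≤ ∑ i : Fin N, v i ^ (1 / α) :=
  implicit_euler_mass_nondecreasing_general α β τ hα N h v vbar hv hvbar hscheme
end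

section
/- Let a, b > 0 and x, y ≥ 0. Then (x^a − y^a)(x^b − y^b) ≤ (x^{(a+b)/2} − y^{(a+b)/2})² ≤ ((a+b)²/(4ab))·(x^a − y^a)(x^b − y^b). -/
/-!
The lower bound is the Lagrange identity
`(XU - YV)² - (X² - Y²)(U² - V²) = (XV - YU)²` with `X = x^(a/2)`, `U = x^(b/2)`,
`Y = y^(a/2)`, `V = y^(b/2)`.
For the upper bound write `(x^c - y^c)/c = ∫_y^x u^(c-1) du`; since
`u^((a+b)/2 - 1) = u^((a-1)/2) · u^((b-1)/2)`, Cauchy–Schwarz shows that `c ↦ (x^c - y^c)/c`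
is midpoint log-convex, which rearranges to the constant `(a+b)²/(4ab)`.
-/

open MeasureTheory Set

theorem sq_sub_sq_mul_sq_sub_sq_le_sq (X Y U V : ℝ) :
    (X ^ 2 - Y ^ 2) * (U ^ 2 - V ^ 2) ≤ (X * U - Y * V) ^ 2 := by
  nlinarith [sq_nonneg (X * V - Y * U)]

theorem Real.rpow_eq_rpow_half_sq {z : ℝ} (hz : 0 ≤ z) (c : ℝ) : z ^ c = (z ^ (c / 2)) ^ 2 := by
  rw [← Real.rpow_mul_natCast hz]
  norm_num

theorem rpow_sub_rpow_mul_le_sq {a b x y : ℝ} (hab : a + b ≠ 0) (hx : 0 ≤ x) (hy : 0 ≤ y) :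
    (x ^ a - y ^ a) * (x ^ b - y ^ b) ≤ (x ^ ((a + b) / 2) - y ^ ((a + b) / 2)) ^ 2 := by
  have hmid : ∀ z : ℝ, 0 ≤ z → z ^ ((a + b) / 2) = z ^ (a / 2) * z ^ (b / 2) := fun z hz => by
    rw [add_div, Real.rpow_add' hz (by rwa [← add_div, div_ne_zero_iff, and_iff_left two_ne_zero])]
  rw [hmid x hx, hmid y hy, Real.rpow_eq_rpow_half_sq hx a, Real.rpow_eq_rpow_half_sq hx b,
    Real.rpow_eq_rpow_half_sq hy a, Real.rpow_eq_rpow_half_sq hy b]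
  exact sq_sub_sq_mul_sq_sub_sq_le_sq _ _ _ _

theorem sq_integral_mul_le_integral_sq_mul_integral_sq {α : Type*} [MeasurableSpace α]
    {μ : Measure α} {f g : α → ℝ} (hf : MemLp f 2 μ) (hg : MemLp g 2 μ) :
    (∫ t, f t * g t ∂μ) ^ 2 ≤ (∫ t, f t ^ 2 ∂μ) * ∫ t, g t ^ 2 ∂μ := by
  have hholder := integral_mul_le_Lp_mul_Lq_of_nonneg Real.HolderConjugate.two_two
    (f := |f|) (g := |g|) (.of_forall fun _ => abs_nonneg _)
    (.of_forall fun _ => abs_nonneg _) (by simpa using hf.abs) (by simpa using hg.abs)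
  simp only [Pi.abs_apply, Real.rpow_two, sq_abs] at hholder
  have hF : 0 ≤ ∫ t, f t ^ 2 ∂μ := integral_nonneg fun _ => sq_nonneg _
  have hG : 0 ≤ ∫ t, g t ^ 2 ∂μ := integral_nonneg fun _ => sq_nonneg _
  calc (∫ t, f t * g t ∂μ) ^ 2 ≤ (∫ t, |f t| * |g t| ∂μ) ^ 2 := by
        rw [← sq_abs]
        gcongr
        simpa only [abs_mul] using abs_integral_le_integral_abs (f := fun t => f t * g t)
    _ ≤ ((∫ t, f t ^ 2 ∂μ) ^ (1 / 2 : ℝ) * (∫ t, g t ^ 2 ∂μ) ^ (1 / 2 : ℝ)) ^ 2 := by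
        gcongr
    _ = (∫ t, f t ^ 2 ∂μ) * ∫ t, g t ^ 2 ∂μ := by
        rw [mul_pow, ← Real.sqrt_eq_rpow, ← Real.sqrt_eq_rpow, Real.sq_sqrt hF, Real.sq_sqrt hG]

theorem integral_Ioc_rpow_sub_one {c : ℝ} (hc : 0 < c) {x y : ℝ} (hxy : y ≤ x) :
    ∫ u in Ioc y x, u ^ (c - 1) = (x ^ c - y ^ c) / c := by
  rw [← intervalIntegral.integral_of_le hxy, integral_rpow (.inl (by linarith))]
  norm_num

theorem memLp_two_rpow_half_sub_one {c : ℝ} (hc : 0 < c) {x y : ℝ} (hy : 0 ≤ y) :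
    MemLp (fun u : ℝ => u ^ ((c - 1) / 2)) 2 (volume.restrict (Ioc y x)) := by
  refine (memLp_two_iff_integrable_sq (by fun_prop)).2 ?_
  refine (intervalIntegral.intervalIntegrable_rpow' (a := y) (b := x)
    (by linarith : (-1 : ℝ) < c - 1)).1.congr_fun (fun u hu => ?_) measurableSet_Ioc
  exact Real.rpow_eq_rpow_half_sq (hy.trans hu.1.le) _

theorem sq_rpow_sub_rpow_div_le_mul {a b x y : ℝ} (ha : 0 < a) (hb : 0 < b) (hx : 0 ≤ x)
    (hy : 0 ≤ y) :
    ((x ^ ((a + b) / 2) - y ^ ((a + b) / 2)) / ((a + b) / 2)) ^ 2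
      ≤ (x ^ a - y ^ a) / a * ((x ^ b - y ^ b) / b) := by
  wlog hxy : y ≤ x generalizing x y
  · convert this hy hx (le_of_not_ge hxy) using 1 <;> ring
  have hprod : ∫ u in Ioc y x, u ^ ((a - 1) / 2) * u ^ ((b - 1) / 2)
      = (x ^ ((a + b) / 2) - y ^ ((a + b) / 2)) / ((a + b) / 2) := by
    rw [← integral_Ioc_rpow_sub_one (by positivity) hxy]
    refine setIntegral_congr_fun measurableSet_Ioc fun u hu => ?_
    rw [← Real.rpow_add (hy.trans_lt hu.1)]
    ring_nf
  have hsq : ∀ c, 0 < c → ∫ u in Ioc y x, (u ^ ((c - 1) / 2)) ^ 2 = (x ^ c - y ^ c) / c :=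
    fun c hc => by
      rw [← integral_Ioc_rpow_sub_one hc hxy]
      exact setIntegral_congr_fun measurableSet_Ioc fun u hu =>
        (Real.rpow_eq_rpow_half_sq (hy.trans hu.1.le) _).symm
  rw [← hprod, ← hsq a ha, ← hsq b hb]
  exact sq_integral_mul_le_integral_sq_mul_integral_sq (memLp_two_rpow_half_sub_one ha hy)
    (memLp_two_rpow_half_sub_one hb hy)

/-- Elementary two-sided power inequality (Lemma A.3 / lem.xy). -/
theorem power_mean_two_sided
    (a b : ℝ) (ha : 0 < a) (hb : 0 < b) (x y : ℝ) (hx : 0 ≤ x) (hy : 0 ≤ y) :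
    (x ^ a - y ^ a) * (x ^ b - y ^ b) ≤ (x ^ ((a + b) / 2) - y ^ ((a + b) / 2)) ^ 2 ∧
    (x ^ ((a + b) / 2) - y ^ ((a + b) / 2)) ^ 2
      ≤ (a + b) ^ 2 / (4 * a * b) * ((x ^ a - y ^ a) * (x ^ b - y ^ b)) := by
  refine ⟨rpow_sub_rpow_mul_le_sq (by positivity) hx hy, ?_⟩
  have hlogconv := sq_rpow_sub_rpow_div_le_mul ha hb hx hy
  rw [div_pow, div_le_iff₀ (by positivity)] at hlogconv
  refine hlogconv.trans_eq ?_
  field_simp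
  ring
end
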